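/- Suppose n ≥ 2, B : I → 2^Q is injective, and for every q ∈ Q the singleton {q} is in the range of B. Then |T(n, k, B)| ≤ 3 · n!. -/

import Mathlib

/-!
Common definitions. `Q` is a finite set, `I = {1,…,k}` and `B : I → 2^Q`
(modelled as `B : ℕ → Set Q` used on indices in `{1,…,k}`). For a finite
sequence `α` over `I` (a `List ℕ`): `U(α) = ∪_{i} B(α[i])`,
`Cover(α) = { j ∈ I : B(j) ⊆ U(α) }`, and `Mini(α)` is the set of minimal
(and least-index among ties) extensions. A Mini-increasing sequence is a
nonempty `α` with `α[i] ∈ Mini(α[1..i−1])` for all positions `i`; these are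
exactly the non-root nodes of the increasing tree of sets `T(n,k,B)`.
-/

section
variable {Q : Type}

/-- `U(α) = ∪_{i=1}^{|α|} B(α[i])`. -/
def UB (B : ℕ → Set Q) (α : List ℕ) : Set Q := {q | ∃ j ∈ α, q ∈ B j}

/-- `Cover(α) = { j ∈ I : B(j) ⊆ U(α) }` where `I = {1,…,k}`. -/
def Cover (B : ℕ → Set Q) (k : ℕ) (α : List ℕ) : Set ℕ :=
  {j | 1 ≤ j ∧ j ≤ k ∧ B j ⊆ UB B α}

/-- `Mini(α)`: the `j ∈ I \ Cover(α)` minimally (and with least index among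
ties) extending `U(α)`. -/
def Mini (B : ℕ → Set Q) (k : ℕ) (α : List ℕ) : Set ℕ :=
  {j | (1 ≤ j ∧ j ≤ k ∧ j ∉ Cover B k α) ∧
    ∀ j', 1 ≤ j' → j' ≤ k → j' ∉ Cover B k α →
      (j' ≠ j → ¬ (B j' ∪ UB B α ⊂ B j ∪ UB B α)) ∧
      (j' < j → B j' ∪ UB B α ≠ B j ∪ UB B α)}

/-- A Mini-increasing sequence: nonempty, and each entry belongs to `Mini` of
the preceding prefix (0-indexed). -/
def MiniIncreasing (B : ℕ → Set Q) (k : ℕ) (α : List ℕ) : Prop :=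
  α ≠ [] ∧ ∀ i j, α[i]? = some j → j ∈ Mini B k (α.take i)

end

/-!
When every singleton `{q}` is some `B j`, a step `j ∈ Mini(β)` adds exactly one new point `q` to
`U(β)`, and distinct elements of `Mini(β)` give distinct unions `B j ∪ U(β)`. Hence a
Mini-increasing sequence is determined by the list of points it adds, which is a list of distinct
elements of `Q`. There are `∑_{m ≤ n} n!/(n-m)! < e · n!` such lists.
-/

theorem List.inits_append_singleton {α : Type*} (l : List α) (a : α) :
    (l ++ [a]).inits = l.inits ++ [l ++ [a]] := by
  simp [List.inits_append]

theorem List.card_nodup_le (α : Type*) [Fintype α] :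
    Nat.card {l : List α // l.Nodup} ≤
      ∑ m ∈ Finset.range (Fintype.card α + 1), (Fintype.card α).descFactorial m := by
  let toEmb : {l : List α // l.Nodup} → Σ m : Fin (Fintype.card α + 1), (Fin m ↪ α) :=
    fun l => ⟨⟨l.1.length, Nat.lt_succ_of_le l.2.length_le_card⟩,
      ⟨l.1.get, List.nodup_iff_injective_get.mp l.2⟩⟩
  have hinj : Function.Injective toEmb := fun l l' hl =>
    Subtype.ext <| by simpa [toEmb] using congrArg (fun p => List.ofFn p.2) hl
  calc Nat.card {l : List α // l.Nodup}
      ≤ Nat.card (Σ m : Fin (Fintype.card α + 1), (Fin m ↪ α)) :=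
        Nat.card_le_card_of_injective toEmb hinj
    _ = _ := by
        rw [Nat.card_eq_fintype_card, Fintype.card_sigma,
          ← Fin.sum_univ_eq_sum_range (fun m => (Fintype.card α).descFactorial m)]
        simp [Fintype.card_embedding_eq]

theorem Nat.sum_range_descFactorial_lt (n : ℕ) :
    ∑ m ∈ Finset.range (n + 1), n.descFactorial m < 3 * n.factorial := by
  have hrec : ∀ n : ℕ, ∑ m ∈ Finset.range (n + 1 + 1), (n + 1).descFactorial m =
      (n + 1) * ∑ m ∈ Finset.range (n + 1), n.descFactorial m + 1 := by
    intro n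
    rw [Finset.sum_range_succ', Finset.mul_sum]
    simp only [Nat.succ_descFactorial_succ, Nat.descFactorial_zero]
  obtain _ | n := n
  · simp
  suffices ∑ m ∈ Finset.range (n + 1 + 1), (n + 1).descFactorial m + 1 ≤
      3 * (n + 1).factorial by omega
  induction n with
  | zero => simp [Finset.sum_range_succ]
  | succ n ih =>
    rw [hrec, Nat.factorial_succ (n + 1)]
    nlinarith

section MiniChain

variable {Q : Type} {B : ℕ → Set Q} {k : ℕ}

theorem UB_append_singleton (α : List ℕ) (j : ℕ) : UB B (α ++ [j]) = B j ∪ UB B α := by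
  ext q
  simp only [UB, Set.mem_ofPred_eq, List.mem_append, List.mem_singleton, Set.mem_union]
  constructor
  · rintro ⟨j', hj' | rfl, hq⟩
    exacts [Or.inr ⟨j', hj', hq⟩, Or.inl hq]
  · rintro (hq | ⟨j', hj', hq⟩)
    exacts [⟨j, Or.inr rfl, hq⟩, ⟨j', Or.inl hj', hq⟩]

theorem eq_of_mem_mini_of_union_eq {β : List ℕ} {j j' : ℕ} (hj : j ∈ Mini B k β)
    (hj' : j' ∈ Mini B k β) (h : B j ∪ UB B β = B j' ∪ UB B β) : j = j' := by
  obtain ⟨⟨hj1, hjk, hjc⟩, hjmin⟩ := hj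
  obtain ⟨⟨hj1', hjk', hjc'⟩, hjmin'⟩ := hj'
  rcases lt_trichotomy j j' with hlt | heq | hgt
  · exact absurd h ((hjmin' j hj1 hjk hjc).2 hlt)
  · exact heq
  · exact absurd h.symm ((hjmin j' hj1' hjk' hjc').2 hgt)

/-- Any new point `q` of `B j` is `B j₀ = {q}` for some index `j₀`, and minimality of `j` forces
`B j ∪ U(β) = B j₀ ∪ U(β)`. -/
theorem exists_union_eq_insert_of_mem_mini
    (hsing : ∀ q : Q, ∃ j, 1 ≤ j ∧ j ≤ k ∧ B j = {q}) {β : List ℕ} {j : ℕ} (hj : j ∈ Mini B k β) :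
    ∃ q ∉ UB B β, B j ∪ UB B β = insert q (UB B β) := by
  obtain ⟨⟨hj1, hjk, hjc⟩, hjmin⟩ := hj
  obtain ⟨q, hqj, hqU⟩ := Set.not_subset.mp fun hs => hjc ⟨hj1, hjk, hs⟩
  obtain ⟨j₀, hj₀1, hj₀k, hj₀⟩ := hsing q
  refine ⟨q, hqU, ?_⟩
  rw [← Set.singleton_union, ← hj₀]
  by_cases hj₀j : j₀ = j
  · rw [hj₀j]
  have hj₀c : j₀ ∉ Cover B k β := fun hc => hqU (hc.2.2 (hj₀ ▸ rfl))
  have hsub : B j₀ ∪ UB B β ⊆ B j ∪ UB B β := by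
    rw [hj₀, Set.singleton_union]
    exact Set.insert_subset (Or.inl hqj) Set.subset_union_right
  by_contra hne
  exact (hjmin j₀ hj₀1 hj₀k hj₀c).1 hj₀j (hsub.ssubset_of_ne (Ne.symm hne))

variable (B k) in
/-- Unlike `MiniIncreasing`, closed under taking prefixes. -/
def MiniChain (α : List ℕ) : Prop :=
  ∀ i j, α[i]? = some j → j ∈ Mini B k (α.take i)

theorem MiniChain.of_append {α β : List ℕ} (h : MiniChain B k (α ++ β)) :
    MiniChain B k α := by
  intro i j hij
  obtain ⟨hi, -⟩ := List.getElem?_eq_some_iff.mp hij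
  have := h i j (by rwa [List.getElem?_append_left hi])
  rwa [List.take_append_of_le_length hi.le] at this

theorem MiniChain.mem_mini_of_append_singleton {α : List ℕ} {j : ℕ}
    (h : MiniChain B k (α ++ [j])) : j ∈ Mini B k α := by
  simpa using h α.length j (by simp)


theorem MiniChain.eq_of_map_UB_inits_eq {α α' : List ℕ} (h : MiniChain B k α)
    (h' : MiniChain B k α') (he : α.inits.map (UB B) = α'.inits.map (UB B)) : α = α' := by
  induction α using List.reverseRecOn generalizing α' with
  | nil => simpa [eq_comm] using congrArg List.length he
  | append_singleton α j ih =>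
    obtain rfl | ⟨β, j', rfl⟩ := α'.eq_nil_or_concat'
    · simpa using congrArg List.length he
    simp only [List.inits_append_singleton, List.map_append, List.map_singleton] at he
    obtain ⟨he, hlast⟩ := List.append_inj' he rfl
    obtain rfl := ih h.of_append h'.of_append he
    rw [List.singleton_inj, UB_append_singleton, UB_append_singleton] at hlast
    rw [eq_of_mem_mini_of_union_eq h.mem_mini_of_append_singleton
      h'.mem_mini_of_append_singleton hlast]

theorem MiniChain.exists_nodup_inits_eq
    (hsing : ∀ q : Q, ∃ j, 1 ≤ j ∧ j ≤ k ∧ B j = {q}) {α : List ℕ} (h : MiniChain B k α) :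
    ∃ w : List Q, w.Nodup ∧ α.inits.map (UB B) = w.inits.map fun l => {q | q ∈ l} := by
  suffices ∃ w : List Q, w.Nodup ∧ UB B α = {q | q ∈ w} ∧
      α.inits.map (UB B) = w.inits.map fun l => {q | q ∈ l} by
    obtain ⟨w, hw, -, he⟩ := this
    exact ⟨w, hw, he⟩
  induction α using List.reverseRecOn with
  | nil => exact ⟨[], List.nodup_nil, by simp [UB], by simp [UB]⟩
  | append_singleton α j ih =>
    obtain ⟨w, hw, hUw, he⟩ := ih h.of_append
    obtain ⟨q, hqU, hq⟩ :=
      exists_union_eq_insert_of_mem_mini hsing h.mem_mini_of_append_singleton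
    have hU : UB B (α ++ [j]) = {x | x ∈ w ++ [q]} := by
      rw [UB_append_singleton, hq, hUw]
      ext x
      simp [or_comm]
    refine ⟨w ++ [q], ?_, hU, ?_⟩
    · rw [hUw] at hqU
      simpa using hw.concat hqU
    · simp only [List.inits_append_singleton, List.map_append, List.map_singleton, he, hU]

end MiniChain

theorem miniIncreasing_count_all_singletons_general
    {Q : Type} [Fintype Q] (n k : ℕ)
    (hcard : Fintype.card Q = n) (B : ℕ → Set Q)
    (hsing : ∀ q : Q, ∃ j, 1 ≤ j ∧ j ≤ k ∧ B j = {q}) :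
    {α : List ℕ | MiniIncreasing B k α}.ncard ≤ 3 * n.factorial := by
  have htrace : ∀ α ∈ {α : List ℕ | MiniIncreasing B k α}, ∃ w : List Q,
      w.Nodup ∧ α.inits.map (UB B) = w.inits.map fun l => {q | q ∈ l} :=
    fun α hα => MiniChain.exists_nodup_inits_eq hsing hα.2
  choose! trace htrace_nodup htrace_eq using htrace
  calc {α : List ℕ | MiniIncreasing B k α}.ncard
      ≤ Nat.card {w : List Q // w.Nodup} := by
        rw [← Nat.card_coe_set_eq]
        refine Nat.card_le_card_of_injective (fun α => ⟨trace α, htrace_nodup α α.2⟩) ?_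
        rintro ⟨α, hα⟩ ⟨α', hα'⟩ he
        exact Subtype.ext <| MiniChain.eq_of_map_UB_inits_eq hα.2 hα'.2 <| by
          rw [htrace_eq α hα, htrace_eq α' hα',
            show trace α = trace α' from congrArg Subtype.val he]
    _ ≤ ∑ m ∈ Finset.range (n + 1), n.descFactorial m := hcard ▸ List.card_nodup_le Q
    _ ≤ 3 * n.factorial := (Nat.sum_range_descFactorial_lt n).le

theorem miniIncreasing_count_all_singletons
    {Q : Type} [Fintype Q] (n k : ℕ) (hn : 2 ≤ n) (hk : 1 ≤ k)
    (hcard : Fintype.card Q = n) (B : ℕ → Set Q)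
    (hinjB : Set.InjOn B (Set.Icc 1 k))
    (hsing : ∀ q : Q, ∃ j, 1 ≤ j ∧ j ≤ k ∧ B j = {q}) :
    {α : List ℕ | MiniIncreasing B k α}.ncard ≤ 3 * n.factorial :=
  miniIncreasing_count_all_singletons_general n k hcard B hsing
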